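/- arXiv:2410.02496 — 2 statements merged into one kernel-verified Lean document; each statement's English description precedes it below -/
import Mathlib

section
/- Suppose Σ̂ and Σ̂' are positive semidefinite and λ > 0. If Δ ∈ ℝ^{d×d} minimizes F_λ, A = {i ∈ [d²] : vec(Δ)_i ≠ 0} is its active set, s_A = sign(vec(Δ)_A) is the vector of active signs, and the principal submatrix Γ_{A,A} is invertible, then vec(Δ)_A = −(Γ_{A,A})⁻¹ (v_A + λ s_A); in particular Δ is the unique minimizer of F_λ among matrices with active set A and active signs s_A. -/
/-! Writing `x = vec Δ`, the objective is `F_λ(Δ) = ½ xᵀ Γ x + ⟨x, v⟩ + λ ‖x‖₁` with `Γ`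
symmetric. Moving a nonzero coordinate `x_p` of a minimizer by a small `t` does not change its
sign, so `F_λ` changes by `((Γ x + v)_p + λ sign x_p) t + ½ Γ_pp t²`, whose linear coefficient
must vanish. As `x` vanishes off `A`, these equations say `Γ_{A,A} x_A = -(v_A + λ s_A)`.
A second minimizer with the same signs has the same active set, hence the same `x_A`. -/

open Matrix
open scoped Kronecker

/-- Trace inner product ⟨A, B⟩ = tr(A Bᵀ). -/
noncomputable def mInner {d : ℕ} (A B : Matrix (Fin d) (Fin d) ℝ) : ℝ :=
  Matrix.trace (A * Bᵀ)

/-- The D-trace loss L_D(Δ; Σ̂, Σ̂'). -/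
noncomputable def LD {d : ℕ} (S S' Δ : Matrix (Fin d) (Fin d) ℝ) : ℝ :=
  (1 / 4) * (mInner (S * Δ) (Δ * S') + mInner (S' * Δ) (Δ * S)) - mInner Δ (S - S')

/-- The lasso penalized D-trace objective F_λ(Δ) = L_D(Δ) + λ‖Δ‖₁. -/
noncomputable def Fobj {d : ℕ} (S S' : Matrix (Fin d) (Fin d) ℝ) (lam : ℝ)
    (Δ : Matrix (Fin d) (Fin d) ℝ) : ℝ :=
  LD S S' Δ + lam * ∑ i, ∑ j, |Δ i j|

/-- Column-stacking vectorization: `vecM Δ (c, r) = Δ r c`. -/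
def vecM {d : ℕ} (Δ : Matrix (Fin d) (Fin d) ℝ) : Fin d × Fin d → ℝ :=
  fun p => Δ p.2 p.1

/-- Γ = (Σ̂ ⊗ Σ̂' + Σ̂' ⊗ Σ̂)/2. -/
noncomputable def Gam {d : ℕ} (S S' : Matrix (Fin d) (Fin d) ℝ) :
    Matrix (Fin d × Fin d) (Fin d × Fin d) ℝ :=
  (1 / 2 : ℝ) • (S ⊗ₖ S' + S' ⊗ₖ S)

/-- v = vec(Σ̂' − Σ̂). -/
noncomputable def vv {d : ℕ} (S S' : Matrix (Fin d) (Fin d) ℝ) : Fin d × Fin d → ℝ :=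
  vecM (S' - S)

/-- The principal submatrix Γ_{A,A} of a d²×d² matrix, indexed by a finite
index set A ⊆ [d²]. -/
noncomputable def subAA {d : ℕ} (G : Matrix (Fin d × Fin d) (Fin d × Fin d) ℝ)
    (A : Finset (Fin d × Fin d)) : Matrix {i // i ∈ A} {i // i ∈ A} ℝ :=
  G.submatrix Subtype.val Subtype.val

noncomputable def lassoObjective {n : Type*} [Fintype n] (G : Matrix n n ℝ) (w : n → ℝ)
    (lam : ℝ) (x : n → ℝ) : ℝ :=
  (1 / 2) * (x ⬝ᵥ G *ᵥ x) + x ⬝ᵥ w + lam * ∑ i, |x i|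

lemma abs_add_eq_of_abs_lt {a t : ℝ} (h : |t| < |a|) : |a + t| = |a| + Real.sign a * t := by
  rcases lt_trichotomy a 0 with ha | rfl | ha
  · rw [Real.sign_of_neg ha, abs_of_neg ha,
      abs_of_neg (by linarith [le_abs_self t, abs_of_neg ha])]
    ring
  · exact absurd h (by simp)
  · rw [Real.sign_of_pos ha, abs_of_pos ha,
      abs_of_pos (by linarith [neg_abs_le t, abs_of_pos ha])]
    ring

lemma Matrix.IsSymm.kronecker {m n R : Type*} [Mul R] {A : Matrix m m R} {B : Matrix n n R}
    (hA : A.IsSymm) (hB : B.IsSymm) : (A ⊗ₖ B).IsSymm := by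
  rw [IsSymm, ← kroneckerMap_transpose, hA.eq, hB.eq]

lemma eq_zero_of_isLocalMin_mul_add_mul_sq {a b : ℝ}
    (h : IsLocalMin (fun t => a * t + b * t ^ 2) 0) : a = 0 := by
  have hderiv :=
    ((hasDerivAt_id' (0 : ℝ)).const_mul a).add ((hasDerivAt_pow 2 (0 : ℝ)).const_mul b)
  norm_num at hderiv
  exact h.hasDerivAt_eq_zero hderiv

section LassoObjective

variable {n : Type*} [Fintype n] [DecidableEq n] {G : Matrix n n ℝ} {w : n → ℝ} {lam : ℝ}
  {x x' : n → ℝ}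

lemma sum_abs_add_single {p : n} {t : ℝ} (ht : |t| < |x p|) :
    ∑ i, |(x + Pi.single p t : n → ℝ) i| = ∑ i, |x i| + Real.sign (x p) * t := by
  rw [← Finset.add_sum_erase _ _ (Finset.mem_univ p),
    ← Finset.add_sum_erase _ _ (Finset.mem_univ p), Pi.add_apply, Pi.single_eq_same,
    abs_add_eq_of_abs_lt ht]
  have hrest : ∀ i ∈ Finset.univ.erase p, |(x + Pi.single p t : n → ℝ) i| = |x i| :=
    fun i hi => by rw [Pi.add_apply, Pi.single_eq_of_ne (Finset.ne_of_mem_erase hi), add_zero]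
  rw [Finset.sum_congr rfl hrest]
  ring

lemma dotProduct_mulVec_add_single (hG : G.IsSymm) (p : n) (t : ℝ) :
    (x + Pi.single p t) ⬝ᵥ G *ᵥ (x + Pi.single p t)
      = x ⬝ᵥ G *ᵥ x + 2 * (G *ᵥ x) p * t + G p p * t ^ 2 := by
  have hsymm : x ⬝ᵥ G *ᵥ Pi.single p t = (G *ᵥ x) p * t := by
    rw [dotProduct_mulVec, ← mulVec_transpose, hG.eq, dotProduct_single]
  rw [mulVec_add, dotProduct_add, add_dotProduct, add_dotProduct, hsymm, single_dotProduct,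
    single_dotProduct, mulVec_single]
  simp only [Pi.smul_apply, op_smul_eq_mul, col_apply]
  ring

lemma lassoObjective_add_single (hG : G.IsSymm) {p : n} {t : ℝ} (ht : |t| < |x p|) :
    lassoObjective G w lam (x + Pi.single p t)
      = lassoObjective G w lam x + ((G *ᵥ x + w) p + lam * Real.sign (x p)) * t
        + G p p / 2 * t ^ 2 := by
  rw [lassoObjective, lassoObjective, dotProduct_mulVec_add_single hG, sum_abs_add_single ht,
    add_dotProduct, single_dotProduct, Pi.add_apply]
  ring

lemma lassoObjective_stationary_of_isMinOn (hG : G.IsSymm)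
    (hmin : IsMinOn (lassoObjective G w lam) Set.univ x)
    {p : n} (hp : x p ≠ 0) : (G *ᵥ x + w) p + lam * Real.sign (x p) = 0 := by
  refine eq_zero_of_isLocalMin_mul_add_mul_sq (b := G p p / 2) ?_
  filter_upwards [Metric.ball_mem_nhds (0 : ℝ) (abs_pos.mpr hp)] with t ht
  have ht : |t| < |x p| := by simpa using ht
  have hle := isMinOn_iff.mp hmin (x + Pi.single p t) (Set.mem_univ _)
  rw [lassoObjective_add_single hG ht] at hle
  simp only [zero_pow two_ne_zero, mul_zero, add_zero]
  linarith

lemma lassoObjective_active_eq_of_isMinOn (hG : G.IsSymm)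
    (hmin : IsMinOn (lassoObjective G w lam) Set.univ x)
    {A : Finset n} (hA : ∀ i, i ∈ A ↔ x i ≠ 0)
    (hinv : IsUnit (G.submatrix ((↑) : A → n) (↑)).det) :
    (fun a : A => x a) =
      -((G.submatrix (↑) (↑))⁻¹ *ᵥ fun a : A => w a + lam * Real.sign (x a)) := by
  set M := G.submatrix ((↑) : A → n) ((↑) : A → n)
  have hM : M *ᵥ (fun a : A => x a) = -fun a : A => w a + lam * Real.sign (x a) := by
    funext a
    have hsupp : (M *ᵥ fun a : A => x a) a = (G *ᵥ x) a := by
      simp only [M, mulVec, dotProduct, submatrix_apply]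
      refine (Finset.sum_coe_sort A (fun q => G a q * x q)).trans
        (Finset.sum_subset (Finset.subset_univ A) fun q _ hq => ?_)
      rw [not_not.mp (mt (hA q).mpr hq), mul_zero]
    have hstat := lassoObjective_stationary_of_isMinOn hG hmin ((hA a).mp a.2)
    rw [Pi.add_apply] at hstat
    rw [hsupp, Pi.neg_apply]
    linarith
  rw [← mulVec_neg, ← hM, mulVec_mulVec, nonsing_inv_mul M hinv, one_mulVec]

lemma lassoObjective_eq_of_isMinOn_of_sign_eq (hG : G.IsSymm)
    (hmin : IsMinOn (lassoObjective G w lam) Set.univ x)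
    (hmin' : IsMinOn (lassoObjective G w lam) Set.univ x')
    {A : Finset n} (hA : ∀ i, i ∈ A ↔ x i ≠ 0)
    (hinv : IsUnit (G.submatrix ((↑) : A → n) (↑)).det)
    (hsign : ∀ i, Real.sign (x' i) = Real.sign (x i)) : x' = x := by
  have hA' : ∀ i, i ∈ A ↔ x' i ≠ 0 := fun i => by
    rw [hA, ne_eq, ne_eq, ← Real.sign_eq_zero_iff, ← hsign, Real.sign_eq_zero_iff]
  have hsigns : (fun a : A => w a + lam * Real.sign (x' a)) =
      fun a : A => w a + lam * Real.sign (x a) := by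
    simp only [hsign]
  have hactive := lassoObjective_active_eq_of_isMinOn hG hmin' hA' hinv
  rw [hsigns, ← lassoObjective_active_eq_of_isMinOn hG hmin hA hinv] at hactive
  funext i
  by_cases hi : i ∈ A
  · exact congrFun hactive ⟨i, hi⟩
  · rw [not_not.mp (mt (hA' i).mpr hi), not_not.mp (mt (hA i).mpr hi)]

end LassoObjective

section DTrace

variable {d : ℕ}

lemma vecM_eq_vec (Δ : Matrix (Fin d) (Fin d) ℝ) : vecM Δ = Δ.vec := rfl

lemma mInner_eq_vecM_dotProduct (X Y : Matrix (Fin d) (Fin d) ℝ) :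
    mInner X Y = vecM X ⬝ᵥ vecM Y := by
  rw [mInner, vecM_eq_vec, vecM_eq_vec, vec_dotProduct_vec, ← trace_transpose, transpose_mul,
    transpose_transpose, trace_mul_comm]

lemma mInner_mul_mul_eq_kronecker (S S' Δ : Matrix (Fin d) (Fin d) ℝ) :
    mInner (S' * Δ) (Δ * S) = vecM Δ ⬝ᵥ (S ⊗ₖ S') *ᵥ vecM Δ := by
  rw [vecM_eq_vec, kronecker_mulVec_vec, ← vecM_eq_vec, ← vecM_eq_vec,
    ← mInner_eq_vecM_dotProduct, mInner, mInner, ← trace_transpose]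
  simp only [transpose_mul, transpose_transpose, Matrix.mul_assoc]

lemma Fobj_eq_lassoObjective (S S' : Matrix (Fin d) (Fin d) ℝ) (lam : ℝ)
    (Δ : Matrix (Fin d) (Fin d) ℝ) :
    Fobj S S' lam Δ = lassoObjective (Gam S S') (vv S S') lam (vecM Δ) := by
  have hlin : mInner Δ (S - S') = -(vecM Δ ⬝ᵥ vv S S') := by
    rw [vv, mInner_eq_vecM_dotProduct, ← dotProduct_neg, vecM_eq_vec, vecM_eq_vec,
      vecM_eq_vec, ← vec_neg, neg_sub]
  rw [Fobj, LD, lassoObjective, mInner_mul_mul_eq_kronecker, mInner_mul_mul_eq_kronecker, hlin,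
    Gam, smul_mulVec, add_mulVec, dotProduct_smul, dotProduct_add, smul_eq_mul,
    Fintype.sum_prod_type, Finset.sum_comm]
  simp only [vecM]
  ring

lemma isSymm_gam {S S' : Matrix (Fin d) (Fin d) ℝ} (hS : S.IsSymm) (hS' : S'.IsSymm) :
    (Gam S S').IsSymm :=
  ((hS.kronecker hS').add (hS'.kronecker hS)).smul _

lemma isMinOn_lassoObjective_vecM {S S' : Matrix (Fin d) (Fin d) ℝ} {lam : ℝ}
    {Δ : Matrix (Fin d) (Fin d) ℝ} (hmin : IsMinOn (Fobj S S' lam) Set.univ Δ) :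
    IsMinOn (lassoObjective (Gam S S') (vv S S') lam) Set.univ (vecM Δ) := by
  refine isMinOn_iff.mpr fun y _ => ?_
  obtain ⟨Δ', rfl⟩ := vec_bijective.surjective y
  rw [← vecM_eq_vec, ← Fobj_eq_lassoObjective, ← Fobj_eq_lassoObjective]
  exact isMinOn_iff.mp hmin Δ' (Set.mem_univ Δ')

end DTrace

theorem stmt6_general {d : ℕ} (S S' : Matrix (Fin d) (Fin d) ℝ)
    (hS : S.PosSemidef) (hS' : S'.PosSemidef) (lam : ℝ)
    (Δ : Matrix (Fin d) (Fin d) ℝ)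
    (hmin : IsMinOn (Fobj S S' lam) Set.univ Δ)
    (A : Finset (Fin d × Fin d)) (hA : ∀ i, i ∈ A ↔ vecM Δ i ≠ 0)
    (hinv : IsUnit (subAA (Gam S S') A).det) :
    (fun a : {i // i ∈ A} => vecM Δ a.val) =
      -((subAA (Gam S S') A)⁻¹.mulVec
        (fun a : {i // i ∈ A} => vv S S' a.val + lam * Real.sign (vecM Δ a.val))) ∧
    ∀ Δ' : Matrix (Fin d) (Fin d) ℝ,
      IsMinOn (Fobj S S' lam) Set.univ Δ' →
      (∀ i : Fin d × Fin d, Real.sign (vecM Δ' i) = Real.sign (vecM Δ i)) →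
      Δ' = Δ := by
  have hG := isSymm_gam (isHermitian_iff_isSymm.mp hS.1) (isHermitian_iff_isSymm.mp hS'.1)
  have hvec := isMinOn_lassoObjective_vecM hmin
  refine ⟨lassoObjective_active_eq_of_isMinOn hG hvec hA hinv, fun Δ' hmin' hsign => ?_⟩
  exact vec_inj.mp (lassoObjective_eq_of_isMinOn_of_sign_eq hG hvec
    (isMinOn_lassoObjective_vecM hmin') hA hinv hsign)

/-- if Δ minimizes F_λ, A is its active set, s_A its active signs,
and Γ_{A,A} is invertible, then vec(Δ)_A = −(Γ_{A,A})⁻¹ (v_A + λ s_A); in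
particular Δ is the unique minimizer with that active set and those signs. -/
theorem stmt6 {d : ℕ} (hd : 1 ≤ d) (S S' : Matrix (Fin d) (Fin d) ℝ)
    (hS : S.PosSemidef) (hS' : S'.PosSemidef) (lam : ℝ) (hlam : 0 < lam)
    (Δ : Matrix (Fin d) (Fin d) ℝ)
    (hmin : IsMinOn (Fobj S S' lam) Set.univ Δ)
    (A : Finset (Fin d × Fin d)) (hA : ∀ i, i ∈ A ↔ vecM Δ i ≠ 0)
    (hinv : IsUnit (subAA (Gam S S') A).det) :
    (fun a : {i // i ∈ A} => vecM Δ a.val) =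
      -((subAA (Gam S S') A)⁻¹.mulVec
        (fun a : {i // i ∈ A} => vv S S' a.val + lam * Real.sign (vecM Δ a.val))) ∧
    ∀ Δ' : Matrix (Fin d) (Fin d) ℝ,
      IsMinOn (Fobj S S' lam) Set.univ Δ' →
      (∀ i : Fin d × Fin d, Real.sign (vecM Δ' i) = Real.sign (vecM Δ i)) →
      Δ' = Δ :=
  stmt6_general S S' hS hS' lam Δ hmin A hA hinv
end

section
/- Suppose Σ̂ and Σ̂' are positive semidefinite and λ > 0. Then the zero matrix minimizes F_λ over ℝ^{d×d} if and only if λ ≥ ‖Σ̂ − Σ̂'‖_∞, where ‖A‖_∞ = max_{i,j} |A_{i,j}|. -/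
open Matrix
open scoped Kronecker

/-!
`F_λ(0) = 0`, so `0` is a minimizer iff `F_λ ≥ 0`. The quadratic part
`q(Δ) = ¼(⟨Σ̂Δ, ΔΣ̂'⟩ + ⟨Σ̂'Δ, ΔΣ̂⟩)` of the loss is nonnegative for positive semidefinite
`Σ̂, Σ̂'`, and `⟨Δ, Σ̂ - Σ̂'⟩ ≤ ‖Σ̂ - Σ̂'‖_∞ ‖Δ‖₁`, which gives `F_λ ≥ 0` when
`λ ≥ ‖Σ̂ - Σ̂'‖_∞`. Conversely, along the ray `t E_ij` through a matrix unit,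
`F_λ(t E_ij) = q(E_ij) t² - (Σ̂ - Σ̂')_ij t + λ|t|`, and nonnegativity of this for `t → 0±`
forces `|(Σ̂ - Σ̂')_ij| ≤ λ`.
-/

theorem Matrix.PosSemidef.trace_mul_mul_mul_transpose_nonneg {m n : Type*} [Fintype m]
    [Fintype n] {A : Matrix m m ℝ} {B : Matrix n n ℝ} (hA : A.PosSemidef) (hB : B.PosSemidef)
    (X : Matrix m n ℝ) : 0 ≤ (A * X * B * Xᵀ).trace := by
  classical
  open scoped MatrixOrder in
  obtain ⟨R, hR, rfl⟩ : ∃ R : Matrix n n ℝ, Rᵀ = R ∧ B = R * R :=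
    ⟨CFC.sqrt B, by simpa using (CFC.sqrt_nonneg B).posSemidef.isHermitian.eq,
      (CFC.sqrt_mul_sqrt_self B hB.nonneg).symm⟩
  have hpsd : ((X * R)ᵀ * A * (X * R)).PosSemidef := by
    simpa using hA.conjTranspose_mul_mul_same (X * R)
  calc (0 : ℝ) ≤ ((X * R)ᵀ * A * (X * R)).trace := hpsd.trace_nonneg
    _ = (A * X * (R * R) * Xᵀ).trace := by
      rw [transpose_mul, hR]
      simp only [Matrix.mul_assoc]
      rw [trace_mul_comm R, Matrix.mul_assoc, trace_mul_comm Xᵀ]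
      simp only [Matrix.mul_assoc]

lemma Real.iSup_le_iff_of_nonneg {ι : Type*} [Finite ι] {f : ι → ℝ} {c : ℝ} (hc : 0 ≤ c) :
    (⨆ i, f i) ≤ c ↔ ∀ i, f i ≤ c :=
  ⟨fun h i => (le_ciSup (Finite.bddAbove_range f) i).trans h, fun h => Real.iSup_le h hc⟩

lemma le_of_forall_mul_le_sq_add_abs {g a c : ℝ} (h : ∀ t, g * t ≤ a * t ^ 2 + c * |t|) :
    g ≤ c := by
  have hlim : Filter.Tendsto (fun t : ℝ => a * t + c) (nhdsWithin 0 (Set.Ioi 0)) (nhds c) := by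
    have : Continuous fun t : ℝ => a * t + c := by fun_prop
    simpa using (this.tendsto 0).mono_left nhdsWithin_le_nhds
  refine ge_of_tendsto hlim (eventually_nhdsWithin_of_forall fun t (ht : 0 < t) => ?_)
  have := h t
  rw [abs_of_pos ht] at this
  nlinarith

lemma abs_le_of_forall_mul_le_sq_add_abs {g a c : ℝ} (h : ∀ t, g * t ≤ a * t ^ 2 + c * |t|) :
    |g| ≤ c :=
  abs_le'.2 ⟨le_of_forall_mul_le_sq_add_abs h, le_of_forall_mul_le_sq_add_abs fun t => by
    simpa [neg_sq, abs_neg, mul_neg, neg_mul] using h (-t)⟩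

section DTrace

variable {d : ℕ}

lemma mInner_eq_sum (A B : Matrix (Fin d) (Fin d) ℝ) :
    mInner A B = ∑ i, ∑ j, A i j * B i j := by
  simp [mInner, Matrix.trace, Matrix.mul_apply]

lemma mInner_le_mul_sum_abs {Δ G : Matrix (Fin d) (Fin d) ℝ} {c : ℝ}
    (hG : ∀ i j, |G i j| ≤ c) : mInner Δ G ≤ c * ∑ i, ∑ j, |Δ i j| := by
  rw [mInner_eq_sum, Finset.mul_sum]
  refine Finset.sum_le_sum fun i _ => ?_
  rw [Finset.mul_sum]
  refine Finset.sum_le_sum fun j _ => ?_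
  calc Δ i j * G i j ≤ |Δ i j| * |G i j| := by rw [← abs_mul]; exact le_abs_self _
    _ ≤ c * |Δ i j| := by rw [mul_comm c]; exact mul_le_mul_of_nonneg_left (hG i j) (abs_nonneg _)

lemma mInner_mul_mul_nonneg {S S' : Matrix (Fin d) (Fin d) ℝ} (hS : S.PosSemidef)
    (hS' : S'.PosSemidef) (Δ : Matrix (Fin d) (Fin d) ℝ) : 0 ≤ mInner (S * Δ) (Δ * S') := by
  have hS'T : S'ᵀ = S' := by simpa using hS'.isHermitian.eq
  rw [mInner, transpose_mul, hS'T, ← Matrix.mul_assoc]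
  exact hS.trace_mul_mul_mul_transpose_nonneg hS' Δ

noncomputable def dtraceQuad (S S' Δ : Matrix (Fin d) (Fin d) ℝ) : ℝ :=
  (1 / 4) * (mInner (S * Δ) (Δ * S') + mInner (S' * Δ) (Δ * S))

lemma dtraceQuad_nonneg {S S' : Matrix (Fin d) (Fin d) ℝ} (hS : S.PosSemidef)
    (hS' : S'.PosSemidef) (Δ : Matrix (Fin d) (Fin d) ℝ) : 0 ≤ dtraceQuad S S' Δ := by
  have := mInner_mul_mul_nonneg hS hS' Δ
  have := mInner_mul_mul_nonneg hS' hS Δ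
  unfold dtraceQuad
  positivity

lemma dtraceQuad_smul (S S' Δ : Matrix (Fin d) (Fin d) ℝ) (t : ℝ) :
    dtraceQuad S S' (t • Δ) = dtraceQuad S S' Δ * t ^ 2 := by
  simp only [dtraceQuad, mInner, Matrix.mul_smul, Matrix.smul_mul, transpose_smul,
    trace_smul, smul_eq_mul]
  ring

lemma Fobj_zero (S S' : Matrix (Fin d) (Fin d) ℝ) (lam : ℝ) : Fobj S S' lam 0 = 0 := by
  simp [Fobj, LD, mInner]

lemma Fobj_nonneg {S S' : Matrix (Fin d) (Fin d) ℝ} (hS : S.PosSemidef) (hS' : S'.PosSemidef)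
    {lam : ℝ} (hlam : ∀ i j, |(S - S') i j| ≤ lam) (Δ : Matrix (Fin d) (Fin d) ℝ) :
    0 ≤ Fobj S S' lam Δ := by
  have hq := dtraceQuad_nonneg hS hS' Δ
  have hlin := mInner_le_mul_sum_abs (Δ := Δ) hlam
  rw [Fobj, LD]
  unfold dtraceQuad at hq
  linarith

lemma Fobj_smul_single (S S' : Matrix (Fin d) (Fin d) ℝ) (lam : ℝ) (i j : Fin d) (t : ℝ) :
    Fobj S S' lam (t • single i j 1) =
      dtraceQuad S S' (single i j 1) * t ^ 2 - (S - S') i j * t + lam * |t| := by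
  have hquad := dtraceQuad_smul S S' (single i j 1) t
  have hlin : mInner (t • single i j 1) (S - S') = (S - S') i j * t := by
    simp [mInner_eq_sum, single_apply, ite_and, mul_comm]
  have hnorm : ∑ x, ∑ y, |(t • single i j (1 : ℝ)) x y| = |t| := by
    simp [single_apply, ite_and, apply_ite abs]
  rw [Fobj, LD, hlin, hnorm, ← hquad]
  rfl

end DTrace

theorem stmt8_general {d : ℕ} (S S' : Matrix (Fin d) (Fin d) ℝ)
    (hS : S.PosSemidef) (hS' : S'.PosSemidef) (lam : ℝ) (hlam : 0 < lam) :
    IsMinOn (Fobj S S' lam) Set.univ (0 : Matrix (Fin d) (Fin d) ℝ) ↔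
      (⨆ p : Fin d × Fin d, |(S - S') p.1 p.2|) ≤ lam := by
  rw [Real.iSup_le_iff_of_nonneg hlam.le, Prod.forall, isMinOn_univ_iff, Fobj_zero]
  constructor
  · intro hmin i j
    refine abs_le_of_forall_mul_le_sq_add_abs (a := dtraceQuad S S' (single i j 1)) fun t => ?_
    have := hmin (t • single i j 1)
    rw [Fobj_smul_single] at this
    linarith
  · exact Fobj_nonneg hS hS'

/-- the zero matrix minimizes F_λ iff λ ≥ ‖Σ̂ − Σ̂'‖_∞, the maximum
of the absolute values of the entries of Σ̂ − Σ̂'. -/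
theorem stmt8 {d : ℕ} (hd : 1 ≤ d) (S S' : Matrix (Fin d) (Fin d) ℝ)
    (hS : S.PosSemidef) (hS' : S'.PosSemidef) (lam : ℝ) (hlam : 0 < lam) :
    IsMinOn (Fobj S S' lam) Set.univ (0 : Matrix (Fin d) (Fin d) ℝ) ↔
      (⨆ p : Fin d × Fin d, |(S - S') p.1 p.2|) ≤ lam :=
  stmt8_general S S' hS hS' lam hlam
end
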